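/- arXiv:nlin/0103011 — 8 statements merged into one kernel-verified Lean document; each statement's English description precedes it below -/
import Mathlib

section
/- Let V be a free ℤ-module with basis D₁,…,D_I, α₁,…,α_J, K, E, and let T : V → V be the ℤ-linear map determined by T(Dᵢ) = Dᵢ, T(αⱼ) = αⱼ + l·kⱼ·K, T(K) = K, T(E) = E + Σⱼ zⱼ·αⱼ, for fixed integers l, k₁,…,k_J, z₁,…,z_J. Then for every v ∈ V there exists a constant C > 0 such that for all natural numbers s, every coordinate of T^s(v) with respect to the basis {D₁,…,D_I, α₁,…,α_J, K, E} has absolute value at most C·(s+1)². In particular the coordinates of T^s(v) grow at most quadratically in s. -/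
/-- the coordinates of `T ^ s v` grow at most quadratically in `s`,
i.e. the degree of the n-th iterate of a discrete Painlevé equation is at most O(n²). -/
theorem painleve_quadratic_growth {V : Type*} [AddCommGroup V] [Module ℤ V]
    (I J : ℕ) (b : Module.Basis (Fin I ⊕ Fin J ⊕ Bool) ℤ V)
    (l : ℤ) (k z : Fin J → ℤ) (T : V →ₗ[ℤ] V)
    (hD : ∀ i : Fin I, T (b (Sum.inl i)) = b (Sum.inl i))
    (hα : ∀ j : Fin J, T (b (Sum.inr (Sum.inl j)))
        = b (Sum.inr (Sum.inl j)) + (l * k j) • b (Sum.inr (Sum.inr false)))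
    (hK : T (b (Sum.inr (Sum.inr false))) = b (Sum.inr (Sum.inr false)))
    (hE : T (b (Sum.inr (Sum.inr true)))
        = b (Sum.inr (Sum.inr true)) + ∑ j : Fin J, z j • b (Sum.inr (Sum.inl j))) :
    ∀ v : V, ∃ C : ℝ, 0 < C ∧ ∀ s : ℕ, ∀ p : Fin I ⊕ Fin J ⊕ Bool,
      |((b.repr ((T ^ s) v)) p : ℝ)| ≤ C * ((s : ℝ) + 1) ^ 2 := by
  intro v
  set N : V →ₗ[ℤ] V := T - LinearMap.id with hNdef
  have hNapp : ∀ w, N w = T w - w := fun w => rfl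
  have hTapp : ∀ w, T w = w + N w := by intro w; rw [hNapp]; abel
  have hN1 : ∀ i : Fin I, N (b (Sum.inl i)) = 0 := by
    intro i; rw [hNapp, hD]; abel
  have hN2 : ∀ j : Fin J, N (b (Sum.inr (Sum.inl j)))
      = (l * k j) • b (Sum.inr (Sum.inr false)) := by
    intro j; rw [hNapp, hα]; abel
  have hN3 : N (b (Sum.inr (Sum.inr false))) = 0 := by
    rw [hNapp, hK]; abel
  have hN4 : N (b (Sum.inr (Sum.inr true)))
      = ∑ j : Fin J, z j • b (Sum.inr (Sum.inl j)) := by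
    rw [hNapp, hE]; abel
  have hN3zero : ∀ w, N (N (N w)) = 0 := by
    have hmap : (N ∘ₗ (N ∘ₗ N)) = 0 := by
      apply b.ext
      rintro (i | j | (_ | _)) <;>
        simp only [LinearMap.comp_apply, LinearMap.zero_apply]
      · rw [hN1, map_zero, map_zero]
      · rw [hN2, map_zsmul, hN3, zsmul_zero, map_zero]
      · rw [hN3, map_zero, map_zero]
      · rw [hN4, map_sum]
        rw [show (∑ j : Fin J, N (z j • b (Sum.inr (Sum.inl j))))
            = ∑ j : Fin J, (z j * (l * k j)) • b (Sum.inr (Sum.inr false))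
            from Finset.sum_congr rfl (fun j _ => by
              rw [map_zsmul, hN2]
              rw [show z j • (l * k j) • b (Sum.inr (Sum.inr false))
                  = (z j * (l * k j)) • b (Sum.inr (Sum.inr false)) from
                (mul_zsmul (b (Sum.inr (Sum.inr false))) (z j) (l * k j)).symm])]
        rw [map_sum]
        rw [show (∑ j : Fin J, N ((z j * (l * k j)) • b (Sum.inr (Sum.inr false))))
            = ∑ j : Fin J, (0 : V)
            from Finset.sum_congr rfl (fun j _ => by
              rw [map_zsmul, hN3, zsmul_zero])]
        simp
    intro w
    exact DFunLike.congr_fun hmap w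
  have key : ∀ s : ℕ, (T ^ s) v
      = v + (s : ℤ) • N v + ((s.choose 2 : ℤ)) • N (N v) := by
    intro s
    induction s with
    | zero => simp
    | succ n ih =>
      rw [pow_succ']
      rw [Module.End.mul_apply, ih, hTapp]
      rw [map_add, map_add, map_zsmul, map_zsmul, hN3zero, zsmul_zero]
      have hch : (((n + 1).choose 2 : ℕ) : ℤ) = (n.choose 2 : ℤ) + n := by
        have h : (n + 1).choose 2 = n.choose 1 + n.choose 2 := Nat.choose_succ_succ n 1
        rw [h, Nat.choose_one_right]
        push_cast; ring
      rw [hch]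
      push_cast
      simp only [add_zsmul, one_zsmul]
      abel
  -- coordinates
  set c0 := b.repr v with hc0
  set c1 := b.repr (N v) with hc1
  set c2 := b.repr (N (N v)) with hc2
  set S : ℝ := ∑ p : Fin I ⊕ Fin J ⊕ Bool, (|(c0 p : ℝ)| + |(c1 p : ℝ)| + |(c2 p : ℝ)|)
    with hS
  have hSnn : 0 ≤ S := Finset.sum_nonneg fun p _ => by positivity
  refine ⟨3 * S + 1, by positivity, ?_⟩
  intro s p
  have h := Finset.single_le_sum
    (f := fun q : Fin I ⊕ Fin J ⊕ Bool => (|(c0 q : ℝ)| + |(c1 q : ℝ)| + |(c2 q : ℝ)|))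
    (fun q _ => by positivity) (Finset.mem_univ p)
  rw [← hS] at h
  have hrepr : (b.repr ((T ^ s) v)) p
      = c0 p + (s : ℤ) * c1 p + (s.choose 2 : ℤ) * c2 p := by
    rw [key s, map_add, map_add, map_zsmul, map_zsmul]
    simp [hc0, hc1, hc2]
  clear_value N c0 c1 c2 S
  have h0 : |(c0 p : ℝ)| ≤ S := by
    have := abs_nonneg ((c1 p : ℝ)); have := abs_nonneg ((c2 p : ℝ)); linarith
  have h1 : |(c1 p : ℝ)| ≤ S := by
    have := abs_nonneg ((c0 p : ℝ)); have := abs_nonneg ((c2 p : ℝ)); linarith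
  have h2 : |(c2 p : ℝ)| ≤ S := by
    have := abs_nonneg ((c0 p : ℝ)); have := abs_nonneg ((c1 p : ℝ)); linarith
  have hs1 : (1 : ℝ) ≤ (s : ℝ) + 1 := by
    have : (0 : ℝ) ≤ (s : ℝ) := Nat.cast_nonneg s
    linarith
  have h12 : (1 : ℝ) ≤ ((s : ℝ) + 1) ^ 2 := by
    simpa using pow_le_pow_left₀ (by norm_num : (0:ℝ) ≤ 1) hs1 2
  have hs2 : (s : ℝ) ≤ ((s : ℝ) + 1) ^ 2 := by
    have h' : (s : ℝ) + 1 ≤ ((s : ℝ) + 1) ^ 2 := le_self_pow₀ hs1 two_ne_zero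
    linarith
  have hch2 : ((s.choose 2 : ℕ) : ℝ) ≤ ((s : ℝ) + 1) ^ 2 := by
    have ha : s.choose 2 ≤ s ^ 2 := Nat.choose_le_pow s 2
    have hb : (s : ℝ) ^ 2 ≤ ((s : ℝ) + 1) ^ 2 :=
      pow_le_pow_left₀ (Nat.cast_nonneg s) (by linarith) 2
    calc ((s.choose 2 : ℕ) : ℝ) ≤ ((s : ℝ)) ^ 2 := by exact_mod_cast ha
      _ ≤ _ := hb
  have hsnn : (0 : ℝ) ≤ (s : ℝ) := Nat.cast_nonneg s
  have hchnn : (0 : ℝ) ≤ ((s.choose 2 : ℕ) : ℝ) := Nat.cast_nonneg _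
  have hq : (0 : ℝ) ≤ ((s : ℝ) + 1) ^ 2 := by positivity
  rw [hrepr]
  push_cast
  calc |(c0 p : ℝ) + (s : ℝ) * (c1 p : ℝ) + ((s.choose 2 : ℕ) : ℝ) * (c2 p : ℝ)|
      ≤ |(c0 p : ℝ)| + (s : ℝ) * |(c1 p : ℝ)| + ((s.choose 2 : ℕ) : ℝ) * |(c2 p : ℝ)| := by
        refine (abs_add_le _ _).trans ?_
        gcongr
        · exact (abs_add_le _ _).trans (by rw [abs_mul, Nat.abs_cast])
        · rw [abs_mul, Nat.abs_cast]
    _ ≤ S * ((s : ℝ) + 1) ^ 2 + S * ((s : ℝ) + 1) ^ 2 + S * ((s : ℝ) + 1) ^ 2 := by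
        refine add_le_add (add_le_add ?_ ?_) ?_
        · exact h0.trans (le_mul_of_one_le_right hSnn h12)
        · calc (s : ℝ) * |(c1 p : ℝ)| ≤ ((s : ℝ) + 1) ^ 2 * S :=
                mul_le_mul hs2 h1 (abs_nonneg _) hq
            _ = S * ((s : ℝ) + 1) ^ 2 := mul_comm _ _
        · calc ((s.choose 2 : ℕ) : ℝ) * |(c2 p : ℝ)| ≤ ((s : ℝ) + 1) ^ 2 * S :=
                mul_le_mul hch2 h2 (abs_nonneg _) hq
            _ = S * ((s : ℝ) + 1) ^ 2 := mul_comm _ _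
    _ ≤ (3 * S + 1) * ((s : ℝ) + 1) ^ 2 := by nlinarith
end

section
/- Let φ* be the ℤ-linear endomorphism of L = ℤ¹⁶ defined on the basis by φ*(H₀) = 3H₀ + H₁ − E₅ − E₆ − E₇ − E₈ − E₉ − E₁₀, φ*(H₁) = H₀, φ*(E₁) = H₀ − E₈, φ*(E₂) = H₀ − E₇, φ*(E₃) = H₀ − E₆, φ*(E₄) = H₀ − E₅, φ*(E₅) = E₁₁, φ*(E₆) = E₁₂, φ*(E₇) = E₁₃, φ*(E₈) = E₁₄, φ*(E₉) = H₀ − E₁₀, φ*(E₁₀) = H₀ − E₉, φ*(E₁₁) = E₁, φ*(E₁₂) = E₂, φ*(E₁₃) = E₃, φ*(E₁₄) = E₄. Then (3+√5)/2 is a root of the characteristic polynomial of φ*, and every complex root z of the characteristic polynomial of φ* satisfies |z| ≤ (3+√5)/2. In particular the spectral radius of φ* equals (3+√5)/2. -/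
/-- The standard basis vectors `H₀ = e 0`, `H₁ = e 1`, `Eₖ = e (k+1)` of the
Picard lattice `ℤ¹⁶` of the space of initial values of the
Hietarinta–Viallet mapping. -/
def hvBasis : Fin 16 → (Fin 16 → ℤ) := fun i => Pi.single i 1

/-- The matrix of `φ*` in the basis `hvBasis` (columns are the images). -/
def Mhv : Matrix (Fin 16) (Fin 16) ℤ :=
  !![3, 1, 1, 1, 1, 1, 0, 0, 0, 0, 1, 1, 0, 0, 0, 0;
    1, 0, 0, 0, 0, 0, 0, 0, 0, 0, 0, 0, 0, 0, 0, 0;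
    0, 0, 0, 0, 0, 0, 0, 0, 0, 0, 0, 0, 1, 0, 0, 0;
    0, 0, 0, 0, 0, 0, 0, 0, 0, 0, 0, 0, 0, 1, 0, 0;
    0, 0, 0, 0, 0, 0, 0, 0, 0, 0, 0, 0, 0, 0, 1, 0;
    0, 0, 0, 0, 0, 0, 0, 0, 0, 0, 0, 0, 0, 0, 0, 1;
    -1, 0, 0, 0, 0, -1, 0, 0, 0, 0, 0, 0, 0, 0, 0, 0;
    -1, 0, 0, 0, -1, 0, 0, 0, 0, 0, 0, 0, 0, 0, 0, 0;
    -1, 0, 0, -1, 0, 0, 0, 0, 0, 0, 0, 0, 0, 0, 0, 0;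
    -1, 0, -1, 0, 0, 0, 0, 0, 0, 0, 0, 0, 0, 0, 0, 0;
    -1, 0, 0, 0, 0, 0, 0, 0, 0, 0, 0, -1, 0, 0, 0, 0;
    -1, 0, 0, 0, 0, 0, 0, 0, 0, 0, -1, 0, 0, 0, 0, 0;
    0, 0, 0, 0, 0, 0, 1, 0, 0, 0, 0, 0, 0, 0, 0, 0;
    0, 0, 0, 0, 0, 0, 0, 1, 0, 0, 0, 0, 0, 0, 0, 0;
    0, 0, 0, 0, 0, 0, 0, 0, 1, 0, 0, 0, 0, 0, 0, 0;
    0, 0, 0, 0, 0, 0, 0, 0, 0, 1, 0, 0, 0, 0, 0, 0]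

/-- The rational (integer) part of the Perron eigenvector. -/
def hvVa : Fin 16 → ℤ := ![-10, -10, 3, 3, 3, 3, 3, 3, 3, 3, 4, 4, 2, 2, 2, 2]

/-- The `√5`-part of the Perron eigenvector. -/
def hvVb : Fin 16 → ℤ := ![-2, 2, -1, -1, -1, -1, 1, 1, 1, 1, 0, 0, 0, 0, 0, 0]

lemma hv_wa : (2 : ℤ) • Mhv.mulVec hvVa = (3 : ℤ) • hvVa + (5 : ℤ) • hvVb := by decide

lemma hv_wb : (2 : ℤ) • Mhv.mulVec hvVb = hvVa + (3 : ℤ) • hvVb := by decide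

lemma hv_qM : (Mhv*Mhv - (Mhv+Mhv+Mhv) + 1) * (Mhv - 1) * (Mhv + 1)
    * (Mhv*Mhv + Mhv + 1) * (Mhv*Mhv - Mhv + 1) = 0 := by decide

lemma hv_va12 : hvVa 12 = 2 := by decide
lemma hv_vb12 : hvVb 12 = 0 := by decide

/-- Evaluating the characteristic polynomial at a scalar gives a determinant. -/
lemma hv_aeval_charpoly {F : Type} [Field F] (M : Matrix (Fin 16) (Fin 16) ℤ) (z : F) :
    Polynomial.aeval z M.charpoly
      = (z • (1 : Matrix (Fin 16) (Fin 16) F) - M.map (Int.cast : ℤ → F)).det := by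
  rw [Matrix.charpoly, AlgHom.map_det]
  congr 1
  ext i j
  by_cases h : i = j
  · subst h
    simp [Matrix.charmatrix_apply_eq, Matrix.one_apply_eq]
  · simp [Matrix.charmatrix_apply_ne _ _ _ h, Matrix.one_apply_ne h, h]

lemma hv_mulVec_map {F : Type} [Field F] (M : Matrix (Fin 16) (Fin 16) ℤ)
    (v : Fin 16 → ℤ) :
    (M.map (Int.cast : ℤ → F)).mulVec (fun j => ((v j : ℤ) : F))
      = fun i => ((M.mulVec v i : ℤ) : F) := by
  funext i
  simp [Matrix.mulVec, dotProduct, Matrix.map_apply]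

set_option maxHeartbeats 3200000 in
/-- the spectral radius of the action `φ*` of the
Hietarinta–Viallet mapping on the Picard lattice is `(3+√5)/2`. -/
theorem hv_picard_spectral_radius
    (T : (Fin 16 → ℤ) →ₗ[ℤ] (Fin 16 → ℤ))
    (e : Fin 16 → (Fin 16 → ℤ)) (he : e = hvBasis)
    (hT0 : T (e 0) = (3 : ℤ) • e 0 + e 1 - e 6 - e 7 - e 8 - e 9 - e 10 - e 11)
    (hT1 : T (e 1) = e 0)
    (hT2 : T (e 2) = e 0 - e 9)
    (hT3 : T (e 3) = e 0 - e 8)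
    (hT4 : T (e 4) = e 0 - e 7)
    (hT5 : T (e 5) = e 0 - e 6)
    (hT6 : T (e 6) = e 12)
    (hT7 : T (e 7) = e 13)
    (hT8 : T (e 8) = e 14)
    (hT9 : T (e 9) = e 15)
    (hT10 : T (e 10) = e 0 - e 11)
    (hT11 : T (e 11) = e 0 - e 10)
    (hT12 : T (e 12) = e 2)
    (hT13 : T (e 13) = e 3)
    (hT14 : T (e 14) = e 4)
    (hT15 : T (e 15) = e 5) :
    (Polynomial.aeval ((3 + Real.sqrt 5) / 2 : ℝ)) (LinearMap.charpoly T) = 0 ∧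
      ∀ z : ℂ, (Polynomial.aeval z) (LinearMap.charpoly T) = 0 →
        ‖z‖ ≤ (3 + Real.sqrt 5) / 2 := by
  subst he
  -- the matrix of T is Mhv
  have key0 : T (hvBasis 0) = fun i => Mhv i 0 := by rw [hT0]; decide
  have key1 : T (hvBasis 1) = fun i => Mhv i 1 := by rw [hT1]; decide
  have key2 : T (hvBasis 2) = fun i => Mhv i 2 := by rw [hT2]; decide
  have key3 : T (hvBasis 3) = fun i => Mhv i 3 := by rw [hT3]; decide
  have key4 : T (hvBasis 4) = fun i => Mhv i 4 := by rw [hT4]; decide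
  have key5 : T (hvBasis 5) = fun i => Mhv i 5 := by rw [hT5]; decide
  have key6 : T (hvBasis 6) = fun i => Mhv i 6 := by rw [hT6]; decide
  have key7 : T (hvBasis 7) = fun i => Mhv i 7 := by rw [hT7]; decide
  have key8 : T (hvBasis 8) = fun i => Mhv i 8 := by rw [hT8]; decide
  have key9 : T (hvBasis 9) = fun i => Mhv i 9 := by rw [hT9]; decide
  have key10 : T (hvBasis 10) = fun i => Mhv i 10 := by rw [hT10]; decide
  have key11 : T (hvBasis 11) = fun i => Mhv i 11 := by rw [hT11]; decide
  have key12 : T (hvBasis 12) = fun i => Mhv i 12 := by rw [hT12]; decide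
  have key13 : T (hvBasis 13) = fun i => Mhv i 13 := by rw [hT13]; decide
  have key14 : T (hvBasis 14) = fun i => Mhv i 14 := by rw [hT14]; decide
  have key15 : T (hvBasis 15) = fun i => Mhv i 15 := by rw [hT15]; decide
  have key : ∀ j, T (hvBasis j) = fun i => Mhv i j := by
    intro j; fin_cases j
    exacts [key0, key1, key2, key3, key4, key5, key6, key7, key8, key9, key10,
      key11, key12, key13, key14, key15]
  have hmat : LinearMap.toMatrix (Pi.basisFun ℤ (Fin 16)) (Pi.basisFun ℤ (Fin 16)) T
      = Mhv := by
    ext i j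
    rw [LinearMap.toMatrix_apply]
    have hb : (Pi.basisFun ℤ (Fin 16)) j = hvBasis j := by
      simp [Pi.basisFun_apply, hvBasis]
    rw [hb, key j]
    simp
  have hcp : LinearMap.charpoly T = Mhv.charpoly := by
    rw [← LinearMap.charpoly_toMatrix T (Pi.basisFun ℤ (Fin 16)), hmat]
  rw [hcp]
  have s_nonneg : (0:ℝ) ≤ Real.sqrt 5 := Real.sqrt_nonneg 5
  have hs : Real.sqrt 5 * Real.sqrt 5 = 5 := Real.mul_self_sqrt (by norm_num)
  constructor
  · -- (3+√5)/2 is a root: exhibit an eigenvector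
    set s : ℝ := Real.sqrt 5 with hs_def
    set A : Matrix (Fin 16) (Fin 16) ℝ := Mhv.map (Int.cast : ℤ → ℝ) with hA
    set vlam : Fin 16 → ℝ := (fun i => ((hvVa i : ℤ) : ℝ)) + s • (fun i => ((hvVb i : ℤ) : ℝ))
      with hvlam
    have hvne : vlam ≠ 0 := by
      intro h0
      have := congrFun h0 12
      rw [hvlam] at this
      simp [hv_va12, hv_vb12] at this
    have heig : A.mulVec vlam = ((3 + s)/2) • vlam := by
      rw [hvlam, Matrix.mulVec_add, Matrix.mulVec_smul, hA,
        hv_mulVec_map Mhv hvVa, hv_mulVec_map Mhv hvVb]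
      funext i
      have ha : (2:ℝ) * ((Mhv.mulVec hvVa i : ℤ) : ℝ)
          = 3 * ((hvVa i : ℤ) : ℝ) + 5 * ((hvVb i : ℤ) : ℝ) := by
        have := congrFun hv_wa i
        simp only [Pi.smul_apply, Pi.add_apply, smul_eq_mul] at this
        exact_mod_cast this
      have hb : (2:ℝ) * ((Mhv.mulVec hvVb i : ℤ) : ℝ)
          = ((hvVa i : ℤ) : ℝ) + 3 * ((hvVb i : ℤ) : ℝ) := by
        have := congrFun hv_wb i
        simp only [Pi.smul_apply, Pi.add_apply, smul_eq_mul] at this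
        exact_mod_cast this
      simp only [Pi.add_apply, Pi.smul_apply, smul_eq_mul]
      linear_combination (1/2 : ℝ) * ha + (s/2) * hb - (((hvVb i : ℤ) : ℝ)/2) * hs
    rw [hv_aeval_charpoly]
    rw [← Matrix.exists_mulVec_eq_zero_iff]
    refine ⟨vlam, hvne, ?_⟩
    rw [Matrix.sub_mulVec, Matrix.smul_mulVec, Matrix.one_mulVec, heig, sub_self]
  · -- every complex root has modulus at most (3+√5)/2
    intro z hz
    rw [hv_aeval_charpoly] at hz
    rw [← Matrix.exists_mulVec_eq_zero_iff] at hz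
    obtain ⟨v, hvne, hveq⟩ := hz
    set A : Matrix (Fin 16) (Fin 16) ℂ := Mhv.map (Int.cast : ℤ → ℂ) with hA
    have hv : A.mulVec v = z • v := by
      rw [Matrix.sub_mulVec, Matrix.smul_mulVec, Matrix.one_mulVec, sub_eq_zero] at hveq
      exact hveq.symm
    -- map the annihilating identity to ℂ
    have hQC : (A*A - (A+A+A) + 1) * (A - 1) * (A + 1) * (A*A + A + 1) * (A*A - A + 1)
        = 0 := by
      have := congrArg ((Int.castRingHom ℂ).mapMatrix) hv_qM
      simpa [map_mul, map_sub, map_add, map_one, RingHom.mapMatrix_apply, hA] using this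
    have hv2 : (A*A).mulVec v = (z*z) • v := by
      rw [← Matrix.mulVec_mulVec, hv, Matrix.mulVec_smul, hv, smul_smul]
    have e1 : (A*A - (A+A+A) + 1).mulVec v = (z*z - 3*z + 1) • v := by
      rw [Matrix.add_mulVec, Matrix.sub_mulVec, Matrix.add_mulVec, Matrix.add_mulVec,
        hv2, hv, Matrix.one_mulVec]
      module
    have e2 : (A - 1).mulVec v = (z - 1) • v := by
      rw [Matrix.sub_mulVec, hv, Matrix.one_mulVec]; module
    have e3 : (A + 1).mulVec v = (z + 1) • v := by
      rw [Matrix.add_mulVec, hv, Matrix.one_mulVec]; module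
    have e4 : (A*A + A + 1).mulVec v = (z*z + z + 1) • v := by
      rw [Matrix.add_mulVec, Matrix.add_mulVec, hv2, hv, Matrix.one_mulVec]; module
    have e5 : (A*A - A + 1).mulVec v = (z*z - z + 1) • v := by
      rw [Matrix.add_mulVec, Matrix.sub_mulVec, hv2, hv, Matrix.one_mulVec]; module
    have hprod : ((A*A - (A+A+A) + 1) * (A - 1) * (A + 1) * (A*A + A + 1)
        * (A*A - A + 1)).mulVec v = 0 := by
      rw [hQC, Matrix.zero_mulVec]
    rw [← Matrix.mulVec_mulVec, e5, Matrix.mulVec_smul] at hprod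
    rw [← Matrix.mulVec_mulVec, e4, Matrix.mulVec_smul] at hprod
    rw [← Matrix.mulVec_mulVec, e3, Matrix.mulVec_smul] at hprod
    rw [← Matrix.mulVec_mulVec, e2, Matrix.mulVec_smul] at hprod
    rw [e1, smul_smul, smul_smul, smul_smul, smul_smul] at hprod
    have hq0 : (z*z - z + 1) * ((z*z + z + 1) * ((z + 1) * ((z - 1) * (z*z - 3*z + 1)))) = 0 := by
      rcases smul_eq_zero.mp hprod with h | h
      · linear_combination h
      · exact absurd h hvne
    -- case analysis on the vanishing factor
    rcases mul_eq_zero.mp hq0 with h | hq1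
    · -- z² - z + 1 = 0, so z³ = -1 and |z| = 1
      have hz3 : z^3 = -1 := by linear_combination (z + 1) * h
      have habs : ‖z‖ ^ 3 = 1 := by
        rw [← norm_pow, hz3]; simp
      clear * - habs s_nonneg
      nlinarith [norm_nonneg z, sq_nonneg (‖z‖ - 1),
        sq_nonneg (‖z‖ + 1)]
    rcases mul_eq_zero.mp hq1 with h | hq2
    · -- z² + z + 1 = 0, so z³ = 1 and |z| = 1
      have hz3 : z^3 = 1 := by linear_combination (z - 1) * h
      have habs : ‖z‖ ^ 3 = 1 := by
        rw [← norm_pow, hz3]; simp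
      clear * - habs s_nonneg
      nlinarith [norm_nonneg z, sq_nonneg (‖z‖ - 1),
        sq_nonneg (‖z‖ + 1)]
    rcases mul_eq_zero.mp hq2 with h | hq3
    · -- z = -1
      have hz1 : z = -1 := by linear_combination h
      rw [hz1]
      simp
      clear * - s_nonneg
      nlinarith [s_nonneg]
    rcases mul_eq_zero.mp hq3 with h | h
    · -- z = 1
      have hz1 : z = 1 := by linear_combination h
      rw [hz1]
      simp
      clear * - s_nonneg
      nlinarith [s_nonneg]
    · -- z² - 3z + 1 = 0 : z = (3±√5)/2
      have hs5c : (Real.sqrt 5 : ℂ) * (Real.sqrt 5 : ℂ) = 5 := by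
        exact_mod_cast congrArg (Complex.ofReal) hs
      have hfac : (z - ((3 : ℂ) + (Real.sqrt 5 : ℂ))/2) * (z - ((3 : ℂ) - (Real.sqrt 5 : ℂ))/2)
          = 0 := by
        linear_combination h - (1/4 : ℂ) * hs5c
      have h59 : Real.sqrt 5 ≤ 3 := by
        have h9 : Real.sqrt 5 ≤ Real.sqrt 9 := Real.sqrt_le_sqrt (by norm_num)
        rwa [show (9:ℝ) = 3^2 by norm_num, Real.sqrt_sq (by norm_num)] at h9
      rcases mul_eq_zero.mp hfac with h' | h'
      · have hz1 : z = (((3 + Real.sqrt 5)/2 : ℝ) : ℂ) := by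
          rw [sub_eq_zero] at h'; rw [h']; push_cast; ring
        rw [hz1, Complex.norm_real, Real.norm_of_nonneg (by linarith)]
      · have hz1 : z = (((3 - Real.sqrt 5)/2 : ℝ) : ℂ) := by
          rw [sub_eq_zero] at h'; rw [h']; push_cast; ring
        rw [hz1, Complex.norm_real, Real.norm_of_nonneg (by linarith)]
        linarith
end

section
/- Let φ* be the ℤ-linear endomorphism of L = ℤ¹⁶ defined on the basis by φ*(H₀) = 3H₀ + H₁ − E₅ − E₆ − E₇ − E₈ − E₉ − E₁₀, φ*(H₁) = H₀, φ*(E₁) = H₀ − E₈, φ*(E₂) = H₀ − E₇, φ*(E₃) = H₀ − E₆, φ*(E₄) = H₀ − E₅, φ*(E₅) = E₁₁, φ*(E₆) = E₁₂, φ*(E₇) = E₁₃, φ*(E₈) = E₁₄, φ*(E₉) = H₀ − E₁₀, φ*(E₁₀) = H₀ − E₉, φ*(E₁₁) = E₁, φ*(E₁₂) = E₂, φ*(E₁₃) = E₃, φ*(E₁₄) = E₄. Let B be the symmetric bilinear form on L determined by B(H₀,H₁) = B(H₁,H₀) = 1, B(H₀,H₀) = B(H₁,H₁) = 0, B(E_k,E_l)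 = −δ_{kl}, and B(H_i,E_k) = 0. Then φ* preserves B: B(φ*(v), φ*(w)) = B(v, w) for all v, w ∈ L. -/
def hvGram : Matrix (Fin 16) (Fin 16) ℤ :=
  Matrix.of fun i j =>
    if (i = 0 ∧ j = 1) ∨ (i = 1 ∧ j = 0) then 1
    else if i = j ∧ 2 ≤ i.val then -1 else 0

def hvM : Fin 16 → Fin 16 → ℤ :=
  ![![3,1,0,0,0,0,-1,-1,-1,-1,-1,-1,0,0,0,0],
    ![1,0,0,0,0,0,0,0,0,0,0,0,0,0,0,0],
    ![1,0,0,0,0,0,0,0,0,-1,0,0,0,0,0,0],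
    ![1,0,0,0,0,0,0,0,-1,0,0,0,0,0,0,0],
    ![1,0,0,0,0,0,0,-1,0,0,0,0,0,0,0,0],
    ![1,0,0,0,0,0,-1,0,0,0,0,0,0,0,0,0],
    ![0,0,0,0,0,0,0,0,0,0,0,0,1,0,0,0],
    ![0,0,0,0,0,0,0,0,0,0,0,0,0,1,0,0],
    ![0,0,0,0,0,0,0,0,0,0,0,0,0,0,1,0],
    ![0,0,0,0,0,0,0,0,0,0,0,0,0,0,0,1],
    ![1,0,0,0,0,0,0,0,0,0,0,-1,0,0,0,0],
    ![1,0,0,0,0,0,0,0,0,0,-1,0,0,0,0,0],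
    ![0,0,1,0,0,0,0,0,0,0,0,0,0,0,0,0],
    ![0,0,0,1,0,0,0,0,0,0,0,0,0,0,0,0],
    ![0,0,0,0,1,0,0,0,0,0,0,0,0,0,0,0],
    ![0,0,0,0,0,1,0,0,0,0,0,0,0,0,0,0]]

set_option maxRecDepth 100000 in
set_option maxHeartbeats 4000000 in
lemma hv_key : ∀ i j : Fin 16,
    (∑ x : Fin 16, ∑ y : Fin 16, hvM j x * (hvM i y * hvGram y x)) = hvGram i j := by
  intro i j
  fin_cases i <;> fin_cases j <;> decide

set_option maxRecDepth 100000 in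
set_option maxHeartbeats 4000000 in
/-- the action `φ*` of the Hietarinta–Viallet mapping on the
Picard lattice preserves the intersection form. -/
theorem hv_preserves_intersection_form
    (T : (Fin 16 → ℤ) →ₗ[ℤ] (Fin 16 → ℤ))
    (e : Fin 16 → (Fin 16 → ℤ)) (he : e = hvBasis)
    (B : (Fin 16 → ℤ) →ₗ[ℤ] (Fin 16 → ℤ) →ₗ[ℤ] ℤ)
    (hB : ∀ i j : Fin 16, B (e i) (e j) = hvGram i j)
    (hT0 : T (e 0) = (3 : ℤ) • e 0 + e 1 - e 6 - e 7 - e 8 - e 9 - e 10 - e 11)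
    (hT1 : T (e 1) = e 0)
    (hT2 : T (e 2) = e 0 - e 9)
    (hT3 : T (e 3) = e 0 - e 8)
    (hT4 : T (e 4) = e 0 - e 7)
    (hT5 : T (e 5) = e 0 - e 6)
    (hT6 : T (e 6) = e 12)
    (hT7 : T (e 7) = e 13)
    (hT8 : T (e 8) = e 14)
    (hT9 : T (e 9) = e 15)
    (hT10 : T (e 10) = e 0 - e 11)
    (hT11 : T (e 11) = e 0 - e 10)
    (hT12 : T (e 12) = e 2)
    (hT13 : T (e 13) = e 3)
    (hT14 : T (e 14) = e 4)
    (hT15 : T (e 15) = e 5) :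
    ∀ v w : Fin 16 → ℤ, B (T v) (T w) = B v w := by
  subst he
  have hM : ∀ i : Fin 16, T (hvBasis i) = ∑ j, hvM i j • hvBasis j := by
    intro i
    fin_cases i
    · exact hT0.trans (by decide)
    · exact hT1.trans (by decide)
    · exact hT2.trans (by decide)
    · exact hT3.trans (by decide)
    · exact hT4.trans (by decide)
    · exact hT5.trans (by decide)
    · exact hT6.trans (by decide)
    · exact hT7.trans (by decide)
    · exact hT8.trans (by decide)
    · exact hT9.trans (by decide)
    · exact hT10.trans (by decide)
    · exact hT11.trans (by decide)
    · exact hT12.trans (by decide)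
    · exact hT13.trans (by decide)
    · exact hT14.trans (by decide)
    · exact hT15.trans (by decide)
  have key : ∀ i j : Fin 16, B (T (hvBasis i)) (T (hvBasis j)) = hvGram i j := by
    intro i j
    rw [hM i, hM j]
    simp only [map_sum, map_smul, LinearMap.sum_apply, LinearMap.smul_apply,
      smul_eq_mul, hB, Finset.mul_sum]
    exact hv_key i j
  have hsum : ∀ v : Fin 16 → ℤ, v = ∑ i, v i • hvBasis i := by
    intro v; funext k
    simp [hvBasis, Finset.sum_apply, Pi.single_apply]
  intro v w
  conv_lhs => rw [hsum v, hsum w]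
  conv_rhs => rw [hsum v, hsum w]
  simp only [map_sum, map_smul, LinearMap.sum_apply, LinearMap.smul_apply,
    smul_eq_mul, key, hB]
end

section
/- Let φ* be the ℤ-linear endomorphism of L = ℤ¹⁶ defined on the basis by φ*(H₀) = 3H₀ + H₁ − E₅ − E₆ − E₇ − E₈ − E₉ − E₁₀, φ*(H₁) = H₀, φ*(E₁) = H₀ − E₈, φ*(E₂) = H₀ − E₇, φ*(E₃) = H₀ − E₆, φ*(E₄) = H₀ − E₅, φ*(E₅) = E₁₁, φ*(E₆) = E₁₂, φ*(E₇) = E₁₃, φ*(E₈) = E₁₄, φ*(E₉) = H₀ − E₁₀, φ*(E₁₀) = H₀ − E₉, φ*(E₁₁) = E₁, φ*(E₁₂) = E₂, φ*(E₁₃) = E₃, φ*(E₁₄) = E₄. Let K = −2H₀ − 2H₁ + E₁ + E₂ + ⋯ + E₁₄. Then φ*(K) = K. -/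
/-- the action `φ*` of the Hietarinta–Viallet mapping on the
Picard lattice fixes the canonical class `K = −2H₀ − 2H₁ + E₁ + ⋯ + E₁₄`. -/
theorem hv_fixes_canonical_class
    (T : (Fin 16 → ℤ) →ₗ[ℤ] (Fin 16 → ℤ))
    (e : Fin 16 → (Fin 16 → ℤ)) (he : e = hvBasis)
    (hT0 : T (e 0) = (3 : ℤ) • e 0 + e 1 - e 6 - e 7 - e 8 - e 9 - e 10 - e 11)
    (hT1 : T (e 1) = e 0)
    (hT2 : T (e 2) = e 0 - e 9)
    (hT3 : T (e 3) = e 0 - e 8)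
    (hT4 : T (e 4) = e 0 - e 7)
    (hT5 : T (e 5) = e 0 - e 6)
    (hT6 : T (e 6) = e 12)
    (hT7 : T (e 7) = e 13)
    (hT8 : T (e 8) = e 14)
    (hT9 : T (e 9) = e 15)
    (hT10 : T (e 10) = e 0 - e 11)
    (hT11 : T (e 11) = e 0 - e 10)
    (hT12 : T (e 12) = e 2)
    (hT13 : T (e 13) = e 3)
    (hT14 : T (e 14) = e 4)
    (hT15 : T (e 15) = e 5)
    (K : Fin 16 → ℤ)
    (hK : K = (-2 : ℤ) • e 0 + (-2 : ℤ) • e 1 + e 2 + e 3 + e 4 + e 5 + e 6 + e 7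
        + e 8 + e 9 + e 10 + e 11 + e 12 + e 13 + e 14 + e 15) :
    T K = K := by
  subst hK
  simp only [map_add, map_smul, map_sub, hT0, hT1, hT2, hT3, hT4, hT5, hT6, hT7,
    hT8, hT9, hT10, hT11, hT12, hT13, hT14, hT15]
  module
end

section
/- Let φ* be the ℤ-linear endomorphism of L = ℤ¹⁶ defined on the basis by φ*(H₀) = 3H₀ + H₁ − E₅ − E₆ − E₇ − E₈ − E₉ − E₁₀, φ*(H₁) = H₀, φ*(E₁) = H₀ − E₈, φ*(E₂) = H₀ − E₇, φ*(E₃) = H₀ − E₆, φ*(E₄) = H₀ − E₅, φ*(E₅) = E₁₁, φ*(E₆) = E₁₂, φ*(E₇) = E₁₃, φ*(E₈) = E₁₄, φ*(E₉) = H₀ − E₁₀, φ*(E₁₀) = H₀ − E₉, φ*(E₁₁) = E₁, φ*(E₁₂) = E₂, φ*(E₁₃) = E₃, φ*(E₁₄) = E₄, and let v = H₀ + H₁ − E₉. Let hₙ denote the H₀-coordinate of (φ*)ⁿ(v). Then hₙ > 0 for all n ≥ 0 and lim_{n→∞} (1/n)·log(hₙ) = log((3+√5)/2). -/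
/-- One step of the 6-dimensional subsystem `(h, p, a, b, c, f)`. -/
def hvStep (s : ℤ × ℤ × ℤ × ℤ × ℤ × ℤ) : ℤ × ℤ × ℤ × ℤ × ℤ × ℤ :=
  (3 * s.1 + s.2.1 + 4 * s.2.2.1 + 2 * s.2.2.2.2.1 + 1, s.1, s.2.2.2.2.2,
    -s.1 - s.2.2.1, -s.1 - s.2.2.2.2.1 - 1, s.2.2.2.1)

def hvState : ℕ → ℤ × ℤ × ℤ × ℤ × ℤ × ℤ
  | 0 => (1, 1, 0, 0, -1, 0)
  | n + 1 => hvStep (hvState n)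

/-- The vector in `ℤ¹⁶` associated to a state. -/
def hvVec (s : ℤ × ℤ × ℤ × ℤ × ℤ × ℤ) : Fin 16 → ℤ :=
  s.1 • hvBasis 0 + s.2.1 • hvBasis 1
    + s.2.2.1 • (hvBasis 2 + hvBasis 3 + hvBasis 4 + hvBasis 5)
    + s.2.2.2.1 • (hvBasis 6 + hvBasis 7 + hvBasis 8 + hvBasis 9)
    + s.2.2.2.2.1 • hvBasis 10 + (s.2.2.2.2.1 + 1) • hvBasis 11
    + s.2.2.2.2.2 • (hvBasis 12 + hvBasis 13 + hvBasis 14 + hvBasis 15)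

def hseq (n : ℕ) : ℤ := (hvState n).1

lemma hvInv (n : ℕ) :
    ((hvState n).2.1 + 2 * (hvState n).2.2.1 + (hvState n).2.2.2.2.1 = 0) ∧
    ((hvState n).2.2.2.2.1 - 2 * (hvState n).2.2.2.2.2 + 1 = 0) ∧
    ((hvState n).1 + (hvState n).2.2.2.2.1 + 2 * (hvState n).2.2.2.1 = 0) := by
  induction n with
  | zero => simp [hvState]
  | succ n ih =>
    obtain ⟨i1, i2, i3⟩ := ih
    simp only [hvState, hvStep]
    exact ⟨by linarith, by linarith, by linarith⟩

lemma hseq_rec (n : ℕ) : hseq (n + 2) = 3 * hseq (n + 1) - hseq n + 1 := by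
  have i := (hvInv (n + 1)).1
  have hp : (hvState (n + 1)).2.1 = (hvState n).1 := rfl
  have e1 : hseq (n + 2) = 3 * (hvState (n + 1)).1 + (hvState (n + 1)).2.1
      + 4 * (hvState (n + 1)).2.2.1 + 2 * (hvState (n + 1)).2.2.2.2.1 + 1 := rfl
  have e2 : hseq (n + 1) = (hvState (n + 1)).1 := rfl
  have e3 : hseq n = (hvState n).1 := rfl
  rw [e1, e2, e3, ← hp]
  linarith

lemma hseq_zero : hseq 0 = 1 := rfl

lemma hseq_one : hseq 1 = 3 := by norm_num [hseq, hvState, hvStep]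

lemma hseq_pos_mono (n : ℕ) : 1 ≤ hseq n ∧ hseq n ≤ hseq (n + 1) := by
  induction n with
  | zero => rw [hseq_zero, hseq_one]; norm_num
  | succ n ih =>
    have hr := hseq_rec n
    exact ⟨by linarith [ih.1, ih.2], by linarith [ih.1, ih.2]⟩

lemma hseq_formula (n : ℕ) : ((hseq n : ℤ) : ℝ) =
    (1 + Real.sqrt 5 / 5) * ((3 + Real.sqrt 5) / 2) ^ n
      + (1 - Real.sqrt 5 / 5) * ((3 - Real.sqrt 5) / 2) ^ n - 1 := by
  have hs5 : Real.sqrt 5 ^ 2 = 5 := Real.sq_sqrt (by norm_num)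
  have key : ∀ m : ℕ, ((hseq m : ℤ) : ℝ) =
      (1 + Real.sqrt 5 / 5) * ((3 + Real.sqrt 5) / 2) ^ m
        + (1 - Real.sqrt 5 / 5) * ((3 - Real.sqrt 5) / 2) ^ m - 1 ∧
      ((hseq (m + 1) : ℤ) : ℝ) =
      (1 + Real.sqrt 5 / 5) * ((3 + Real.sqrt 5) / 2) ^ (m + 1)
        + (1 - Real.sqrt 5 / 5) * ((3 - Real.sqrt 5) / 2) ^ (m + 1) - 1 := by
    intro m
    induction m with
    | zero =>
      constructor
      · rw [hseq_zero]; push_cast; ring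
      · rw [hseq_one]; push_cast; linear_combination (-1 / 5 : ℝ) * hs5
    | succ m ih =>
      refine ⟨ih.2, ?_⟩
      have hr := hseq_rec m
      have hcast : ((hseq (m + 2) : ℤ) : ℝ)
          = 3 * ((hseq (m + 1) : ℤ) : ℝ) - ((hseq m : ℤ) : ℝ) + 1 := by
        rw [hr]; push_cast; ring
      rw [hcast, ih.1, ih.2]
      have hL : ((3 + Real.sqrt 5) / 2) ^ 2 = 3 * ((3 + Real.sqrt 5) / 2) - 1 := by
        linear_combination (1 / 4 : ℝ) * hs5
      have hM : ((3 - Real.sqrt 5) / 2) ^ 2 = 3 * ((3 - Real.sqrt 5) / 2) - 1 := by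
        linear_combination (1 / 4 : ℝ) * hs5
      linear_combination
        (-(1 + Real.sqrt 5 / 5) * ((3 + Real.sqrt 5) / 2) ^ m) * hL
          + (-(1 - Real.sqrt 5 / 5) * ((3 - Real.sqrt 5) / 2) ^ m) * hM
  exact (key n).1

lemma hseq_entropy :
    Filter.Tendsto (fun n : ℕ => Real.log ((hseq n : ℤ) : ℝ) / (n : ℝ))
      Filter.atTop (nhds (Real.log ((3 + Real.sqrt 5) / 2))) := by
  have hs5 : Real.sqrt 5 ^ 2 = 5 := Real.sq_sqrt (by norm_num)
  have hs5pos : 0 < Real.sqrt 5 := Real.sqrt_pos.mpr (by norm_num)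
  have hs5lt : Real.sqrt 5 < 3 := by nlinarith
  have hs5gt : 2 < Real.sqrt 5 := by nlinarith
  set L : ℝ := (3 + Real.sqrt 5) / 2 with hLdef
  set M : ℝ := (3 - Real.sqrt 5) / 2 with hMdef
  set A : ℝ := 1 + Real.sqrt 5 / 5 with hAdef
  set B : ℝ := 1 - Real.sqrt 5 / 5 with hBdef
  have hL1 : 1 < L := by rw [hLdef]; linarith
  have hL0 : 0 < L := lt_trans one_pos hL1
  have hM0 : 0 < M := by rw [hMdef]; linarith
  have hM1 : M < 1 := by rw [hMdef]; linarith
  have hA0 : 0 < A := by rw [hAdef]; positivity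
  have hpos : ∀ n : ℕ, (0 : ℝ) < ((hseq n : ℤ) : ℝ) := by
    intro n
    have := (hseq_pos_mono n).1
    exact_mod_cast lt_of_lt_of_le zero_lt_one this
  set R : ℕ → ℝ := fun n => ((hseq n : ℤ) : ℝ) / L ^ n with hRdef
  have hRform : ∀ n : ℕ, R n = A + B * (M / L) ^ n - (1 / L) ^ n := by
    intro n
    have hLn : (L : ℝ) ^ n ≠ 0 := (pow_pos hL0 n).ne'
    have gen : ∀ (a b l m : ℝ), l ≠ 0 →
        (a * l ^ n + b * m ^ n - 1) / l ^ n = a + b * (m / l) ^ n - (1 / l) ^ n := by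
      intro a b l m hl
      rw [div_pow, div_pow, one_pow]
      field_simp
    have hLne : L ≠ 0 := hL0.ne'
    rw [hRdef]
    simp only
    rw [hseq_formula n, ← hLdef, ← hMdef, ← hAdef, ← hBdef]
    exact gen A B L M hLne
  have t1 : Filter.Tendsto (fun n : ℕ => (M / L) ^ n) Filter.atTop (nhds 0) := by
    apply tendsto_pow_atTop_nhds_zero_of_lt_one (by positivity)
    rw [div_lt_one hL0]; linarith
  have t2 : Filter.Tendsto (fun n : ℕ => (1 / L) ^ n) Filter.atTop (nhds 0) := by
    apply tendsto_pow_atTop_nhds_zero_of_lt_one (by positivity)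
    rw [div_lt_one hL0]; linarith
  have hRt : Filter.Tendsto R Filter.atTop (nhds A) := by
    have := (((tendsto_const_nhds :
        Filter.Tendsto (fun _ : ℕ => A) Filter.atTop (nhds A))).add
      (t1.const_mul B)).sub t2
    simp only [mul_zero, add_zero, sub_zero] at this
    exact Filter.Tendsto.congr (fun n => (hRform n).symm) this
  have hRpos : ∀ n : ℕ, 0 < R n := fun n => div_pos (hpos n) (pow_pos hL0 n)
  have hlogR : Filter.Tendsto (fun n => Real.log (R n)) Filter.atTop
      (nhds (Real.log A)) :=
    ((Real.continuousAt_log hA0.ne').tendsto).comp hRt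
  have hmain : Filter.Tendsto (fun n : ℕ => Real.log L + Real.log (R n) / (n : ℝ))
      Filter.atTop (nhds (Real.log L + 0)) :=
    tendsto_const_nhds.add (hlogR.div_atTop tendsto_natCast_atTop_atTop)
  rw [add_zero] at hmain
  refine hmain.congr' ?_
  filter_upwards [Filter.eventually_gt_atTop 0] with n hn
  have hLn : (0 : ℝ) < L ^ n := pow_pos hL0 n
  have hsplit : ((hseq n : ℤ) : ℝ) = L ^ n * R n := by
    rw [hRdef]; field_simp
  rw [hsplit, Real.log_mul hLn.ne' (hRpos n).ne', Real.log_pow, add_div,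
    mul_div_cancel_left₀ _ (Nat.cast_ne_zero.mpr hn.ne' : (n : ℝ) ≠ 0)]

/-- the `H₀`-coordinate `hₙ` of `(φ*)ⁿ(H₀ + H₁ − E₉)` is positive
and `(1/n)·log hₙ → log((3+√5)/2)`: the algebraic entropy of the
Hietarinta–Viallet mapping is `log((3+√5)/2)`. -/
theorem hv_algebraic_entropy
    (T : (Fin 16 → ℤ) →ₗ[ℤ] (Fin 16 → ℤ))
    (e : Fin 16 → (Fin 16 → ℤ)) (he : e = hvBasis)
    (hT0 : T (e 0) = (3 : ℤ) • e 0 + e 1 - e 6 - e 7 - e 8 - e 9 - e 10 - e 11)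
    (hT1 : T (e 1) = e 0)
    (hT2 : T (e 2) = e 0 - e 9)
    (hT3 : T (e 3) = e 0 - e 8)
    (hT4 : T (e 4) = e 0 - e 7)
    (hT5 : T (e 5) = e 0 - e 6)
    (hT6 : T (e 6) = e 12)
    (hT7 : T (e 7) = e 13)
    (hT8 : T (e 8) = e 14)
    (hT9 : T (e 9) = e 15)
    (hT10 : T (e 10) = e 0 - e 11)
    (hT11 : T (e 11) = e 0 - e 10)
    (hT12 : T (e 12) = e 2)
    (hT13 : T (e 13) = e 3)
    (hT14 : T (e 14) = e 4)
    (hT15 : T (e 15) = e 5)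
    (v : Fin 16 → ℤ) (hv : v = e 0 + e 1 - e 10) :
    (∀ n : ℕ, 0 < ((T ^ n) v) 0) ∧
      Filter.Tendsto (fun n : ℕ => Real.log ((((T ^ n) v) 0 : ℤ) : ℝ) / (n : ℝ))
        Filter.atTop (nhds (Real.log ((3 + Real.sqrt 5) / 2))) := by
  subst he
  subst hv
  have key : ∀ n : ℕ, (T ^ n) (hvBasis 0 + hvBasis 1 - hvBasis 10) = hvVec (hvState n) := by
    intro n
    induction n with
    | zero =>
      simp only [pow_zero, Module.End.one_apply, hvVec, hvState]
      module
    | succ n ih =>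
      rw [pow_succ', Module.End.mul_apply, ih]
      show T (hvVec (hvState n)) = hvVec (hvStep (hvState n))
      simp only [hvVec, hvStep, map_add, map_smul, hT0, hT1, hT2, hT3, hT4, hT5,
        hT6, hT7, hT8, hT9, hT10, hT11, hT12, hT13, hT14, hT15]
      module
  have coord : ∀ s : ℤ × ℤ × ℤ × ℤ × ℤ × ℤ, hvVec s 0 = s.1 := by
    intro s
    simp [hvVec, hvBasis, Pi.single_apply]
  have hcoord : ∀ n : ℕ, ((T ^ n) (hvBasis 0 + hvBasis 1 - hvBasis 10)) 0 = hseq n := by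
    intro n
    rw [key n, coord]
    rfl
  constructor
  · intro n
    rw [hcoord n]
    exact lt_of_lt_of_le zero_lt_one (hseq_pos_mono n).1
  · have := hseq_entropy
    refine this.congr ?_
    intro n
    rw [hcoord n]
end

section
/- Let a ∈ ℂ, a ≠ 0, and in ℂ[X, Y, Z] set f = Y³, g = −XY² + Y³ + aZ³, h = Y²Z. Define the second iterate components f₂ = f(f, g, h), g₂ = g(f, g, h), h₂ = h(f, g, h), and the third iterate components f₃ = f(f₂, g₂, h₂), g₃ = g(f₂, g₂, h₂), h₃ = h(f₂, g₂, h₂). Then f₂, g₂, h₂ are homogeneous of total degree 9 and have no common nonconstant factor, and f₃, g₃, h₃ are homogeneous of total degree 27 and have no common nonconstant factor. -/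
open MvPolynomial

private lemma mv_isUnit_eq_C :
    ∀ (n : ℕ) (p : MvPolynomial (Fin n) ℂ), IsUnit p → ∃ c : ℂ, p = C c := by
  intro n
  induction n with
  | zero =>
    intro p _
    obtain ⟨c, rfl⟩ := C_surjective (Fin 0) p
    exact ⟨c, rfl⟩
  | succ n ih =>
    intro p hp
    have h1 : IsUnit (finSuccEquiv ℂ n p) := hp.map _
    obtain ⟨r, hr, hCr⟩ := Polynomial.isUnit_iff.mp h1
    obtain ⟨c, rfl⟩ := ih r hr
    refine ⟨c, ?_⟩
    have h2 : ((finSuccEquiv ℂ n).symm :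
        Polynomial (MvPolynomial (Fin n) ℂ) →+* MvPolynomial (Fin (n + 1)) ℂ)
        (Polynomial.C (C c)) = C c := by
      have := finSuccEquiv_comp_C_eq_C (R := ℂ) n
      exact congrArg (fun φ => φ c) this
    calc p = (finSuccEquiv ℂ n).symm (finSuccEquiv ℂ n p) :=
            ((finSuccEquiv ℂ n).symm_apply_apply p).symm
      _ = (finSuccEquiv ℂ n).symm (Polynomial.C (C c)) := by rw [hCr]
      _ = C c := h2

private lemma mv_prime_X (i : Fin 3) : Prime (X i : MvPolynomial (Fin 3) ℂ) := by
  rw [← MulEquiv.prime_iff ((renameEquiv ℂ (Equiv.swap i 0)).trans (finSuccEquiv ℂ 2)).toMulEquiv]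
  have : ((renameEquiv ℂ (Equiv.swap i 0)).trans (finSuccEquiv ℂ 2)).toMulEquiv (X i)
      = Polynomial.X := by
    show (finSuccEquiv ℂ 2) ((renameEquiv ℂ (Equiv.swap i 0)) (X i)) = Polynomial.X
    rw [renameEquiv_apply, rename_X, Equiv.swap_apply_left, finSuccEquiv_X_zero]
  rw [this]
  exact Polynomial.prime_X

/-- the second and third iterates of the homogeneous form
`φ'(X,Y,Z) = (Y³, −XY² + Y³ + aZ³, Y²Z)` of the Hietarinta–Viallet mapping are
homogeneous of degrees 9 and 27 and have no common nonconstant factor. -/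
theorem hv_p2_iterates_no_common_factor (a : ℂ) (ha : a ≠ 0)
    (f g h : MvPolynomial (Fin 3) ℂ)
    (hf : f = X 1 ^ 3)
    (hg : g = -X 0 * X 1 ^ 2 + X 1 ^ 3 + C a * X 2 ^ 3)
    (hh : h = X 1 ^ 2 * X 2)
    (f₂ g₂ h₂ f₃ g₃ h₃ : MvPolynomial (Fin 3) ℂ)
    (hf₂ : f₂ = aeval ![f, g, h] f) (hg₂ : g₂ = aeval ![f, g, h] g)
    (hh₂ : h₂ = aeval ![f, g, h] h)
    (hf₃ : f₃ = aeval ![f₂, g₂, h₂] f) (hg₃ : g₃ = aeval ![f₂, g₂, h₂] g)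
    (hh₃ : h₃ = aeval ![f₂, g₂, h₂] h) :
    (f₂.IsHomogeneous 9 ∧ g₂.IsHomogeneous 9 ∧ h₂.IsHomogeneous 9) ∧
    (∀ p : MvPolynomial (Fin 3) ℂ, p ∣ f₂ → p ∣ g₂ → p ∣ h₂ → p.totalDegree = 0) ∧
    (f₃.IsHomogeneous 27 ∧ g₃.IsHomogeneous 27 ∧ h₃.IsHomogeneous 27) ∧
    (∀ p : MvPolynomial (Fin 3) ℂ, p ∣ f₃ → p ∣ g₃ → p ∣ h₃ → p.totalDegree = 0) := by
  -- explicit formulas for aeval compositions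
  have haf : ∀ p q r : MvPolynomial (Fin 3) ℂ, aeval ![p, q, r] f = q ^ 3 := by
    intro p q r; rw [hf]; simp
  have hag : ∀ p q r : MvPolynomial (Fin 3) ℂ,
      aeval ![p, q, r] g = -p * q ^ 2 + q ^ 3 + C a * r ^ 3 := by
    intro p q r; rw [hg]
    simp [algebraMap_eq]
  have hah : ∀ p q r : MvPolynomial (Fin 3) ℂ, aeval ![p, q, r] h = q ^ 2 * r := by
    intro p q r; rw [hh]; simp
  have Hf2 : f₂ = g ^ 3 := hf₂.trans (haf f g h)
  have Hg2 : g₂ = -f * g ^ 2 + g ^ 3 + C a * h ^ 3 := hg₂.trans (hag f g h)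
  have Hh2 : h₂ = g ^ 2 * h := hh₂.trans (hah f g h)
  have Hf3 : f₃ = g₂ ^ 3 := hf₃.trans (haf f₂ g₂ h₂)
  have Hg3 : g₃ = -f₂ * g₂ ^ 2 + g₂ ^ 3 + C a * h₂ ^ 3 := hg₃.trans (hag f₂ g₂ h₂)
  have Hh3 : h₃ = g₂ ^ 2 * h₂ := hh₃.trans (hah f₂ g₂ h₂)
  -- homogeneity
  have HFf : f.IsHomogeneous 3 := by
    rw [hf]; exact (isHomogeneous_X ℂ 1).pow 3
  have HFg : g.IsHomogeneous 3 := by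
    rw [hg]
    exact (((isHomogeneous_X ℂ 0).neg.mul ((isHomogeneous_X ℂ 1).pow 2)).add
      ((isHomogeneous_X ℂ 1).pow 3)).add ((isHomogeneous_C _ a).mul ((isHomogeneous_X ℂ 2).pow 3))
  have HFh : h.IsHomogeneous 3 := by
    rw [hh]; exact ((isHomogeneous_X ℂ 1).pow 2).mul (isHomogeneous_X ℂ 2)
  have H2f : f₂.IsHomogeneous 9 := by rw [Hf2]; exact HFg.pow 3
  have H2g : g₂.IsHomogeneous 9 := by
    rw [Hg2]
    exact ((HFf.neg.mul (HFg.pow 2)).add (HFg.pow 3)).add ((isHomogeneous_C _ a).mul (HFh.pow 3))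
  have H2h : h₂.IsHomogeneous 9 := by rw [Hh2]; exact (HFg.pow 2).mul HFh
  have H3f : f₃.IsHomogeneous 27 := by rw [Hf3]; exact H2g.pow 3
  have H3g : g₃.IsHomogeneous 27 := by
    rw [Hg3]
    exact ((H2f.neg.mul (H2g.pow 2)).add (H2g.pow 3)).add ((isHomogeneous_C _ a).mul (H2h.pow 3))
  have H3h : h₃.IsHomogeneous 27 := by rw [Hh3]; exact (H2g.pow 2).mul H2h
  -- unit and divisibility machinery
  have haC : IsUnit (C a : MvPolynomial (Fin 3) ℂ) :=
    IsUnit.of_mul_eq_one (C a⁻¹) (by rw [← C_mul, mul_inv_cancel₀ ha, C_1])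
  have evalne : ∀ (i : Fin 3) (v : Fin 3 → ℂ) (B : MvPolynomial (Fin 3) ℂ),
      v i = 0 → (X i ∣ B) → eval v B = 0 := by
    rintro i v B hvi ⟨c, rfl⟩
    rw [map_mul, eval_X, hvi, zero_mul]
  have qtoX : ∀ (q : MvPolynomial (Fin 3) ℂ) (i : Fin 3), Prime q → q ∣ X i → X i ∣ q :=
    fun q i hq hd => hq.irreducible.dvd_symm (mv_prime_X i).irreducible hd
  -- no prime divides both g and X 1 or X 2
  have hgX : ∀ q : MvPolynomial (Fin 3) ℂ, Prime q → q ∣ g → (q ∣ X 1 ∨ q ∣ X 2) → False := by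
    intro q hq hqg hcase
    rcases hcase with h1 | h2
    · have hd : (X 1 : MvPolynomial (Fin 3) ℂ) ∣ g := (qtoX q 1 hq h1).trans hqg
      have h0 := evalne 1 ![0, 0, 1] g (by norm_num) hd
      rw [hg] at h0
      simp at h0
      exact ha h0
    · have hd : (X 2 : MvPolynomial (Fin 3) ℂ) ∣ g := (qtoX q 2 hq h2).trans hqg
      have h0 := evalne 2 ![0, 1, 0] g (by simp) hd
      rw [hg] at h0
      simp at h0
  -- no prime divides both g and g₂
  have hgg2 : ∀ q : MvPolynomial (Fin 3) ℂ, Prime q → q ∣ g → q ∣ g₂ → False := by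
    intro q hq hqg hq2
    have hkey : C a * h ^ 3 = g₂ - (-f * g ^ 2 + g ^ 3) := by rw [Hg2]; ring
    have hdvd : q ∣ C a * h ^ 3 := by
      rw [hkey]
      exact dvd_sub hq2 (dvd_add ((dvd_pow hqg two_ne_zero).mul_left _)
        (dvd_pow hqg three_ne_zero))
    have hqh3 : q ∣ h ^ 3 := (hq.dvd_or_dvd hdvd).resolve_left
      (fun hd => hq.not_unit (isUnit_of_dvd_unit hd haC))
    have hqh : q ∣ h := hq.dvd_of_dvd_pow hqh3
    have : q ∣ X 1 ∨ q ∣ X 2 := by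
      rcases hq.dvd_or_dvd (hh ▸ hqh) with h1 | h2
      · exact Or.inl (hq.dvd_of_dvd_pow h1)
      · exact Or.inr h2
    exact hgX q hq hqg this
  -- X 1 and X 2 do not divide g₂
  have hX1g2 : ¬ ((X 1 : MvPolynomial (Fin 3) ℂ) ∣ g₂) := by
    intro hd
    have h0 := evalne 1 ![0, 0, 1] g₂ (by norm_num) hd
    rw [Hg2, hf, hg, hh] at h0
    simp at h0
    exact ha h0
  have hX2g2 : ¬ ((X 2 : MvPolynomial (Fin 3) ℂ) ∣ g₂) := by
    intro hd
    have h0 := evalne 2 ![1, 2, 0] g₂ (by simp) hd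
    rw [Hg2, hf, hg, hh] at h0
    norm_num at h0
    rw [show (![1, 2, 0] : Fin 3 → ℂ) 2 = 0 by simp] at h0
    norm_num at h0
  -- extracting a prime factor from a nonconstant common divisor
  have primefac : ∀ p : MvPolynomial (Fin 3) ℂ, p.totalDegree ≠ 0 →
      ∃ q : MvPolynomial (Fin 3) ℂ, Prime q ∧ q ∣ p := by
    intro p hdeg
    have hp0 : p ≠ 0 := fun hz => hdeg (hz ▸ totalDegree_zero)
    have hpu : ¬IsUnit p := by
      intro hu
      obtain ⟨c, rfl⟩ := mv_isUnit_eq_C 3 p hu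
      exact hdeg (totalDegree_C c)
    obtain ⟨q, hqi, hqp⟩ := WfDvdMonoid.exists_irreducible_factor hpu hp0
    exact ⟨q, UniqueFactorizationMonoid.irreducible_iff_prime.mp hqi, hqp⟩
  refine ⟨⟨H2f, H2g, H2h⟩, ?_, ⟨H3f, H3g, H3h⟩, ?_⟩
  · intro p hp1 hp2 hp3
    by_contra hdeg
    obtain ⟨q, hq, hqp⟩ := primefac p hdeg
    have hqg : q ∣ g := hq.dvd_of_dvd_pow (Hf2 ▸ hqp.trans hp1)
    exact hgg2 q hq hqg (hqp.trans hp2)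
  · intro p hp1 hp2 hp3
    by_contra hdeg
    obtain ⟨q, hq, hqp⟩ := primefac p hdeg
    have hqg2 : q ∣ g₂ := hq.dvd_of_dvd_pow (Hf3 ▸ hqp.trans hp1)
    have hkey3 : C a * h₂ ^ 3 = g₃ - (-f₂ * g₂ ^ 2 + g₂ ^ 3) := by rw [Hg3]; ring
    have hdvd3 : q ∣ C a * h₂ ^ 3 := by
      rw [hkey3]
      exact dvd_sub (hqp.trans hp2) (dvd_add ((dvd_pow hqg2 two_ne_zero).mul_left _)
        (dvd_pow hqg2 three_ne_zero))
    have hqh2 : q ∣ h₂ := hq.dvd_of_dvd_pow ((hq.dvd_or_dvd hdvd3).resolve_left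
      (fun hd => hq.not_unit (isUnit_of_dvd_unit hd haC)))
    rcases hq.dvd_or_dvd (Hh2 ▸ hqh2) with h1 | h2
    · exact hgg2 q hq (hq.dvd_of_dvd_pow h1) hqg2
    · rcases hq.dvd_or_dvd (hh ▸ h2) with h3 | h4
      · exact hX1g2 ((qtoX q 1 hq (hq.dvd_of_dvd_pow h3)).trans hqg2)
      · exact hX2g2 ((qtoX q 2 hq h4).trans hqg2)
end

section
/- Let a ∈ ℂ, a ≠ 0, and in ℂ[X, Y, Z] set f = Y³, g = −XY² + Y³ + aZ³, h = Y²Z. Define iteratively f₁ = f, g₁ = g, h₁ = h and fₙ₊₁ = f(fₙ, gₙ, hₙ), gₙ₊₁ = g(fₙ, gₙ, hₙ), hₙ₊₁ = h(fₙ, gₙ, hₙ). Then f₄, g₄, h₄ are homogeneous of total degree 81, and there exists a homogeneous polynomial p ∈ ℂ[X, Y, Z] of total degree 8 dividing each of f₄, g₄, h₄ such that the quotients f₄/p, g₄/p, h₄/p (homogeneous of degree 73) have no common nonconstant factor. -/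
open MvPolynomial

namespace HV14
set_option maxHeartbeats 1000000

noncomputable abbrev R3 : Type := MvPolynomial (Fin 3) ℂ

noncomputable def gP (a : ℂ) : R3 := -X 0 * X 1 ^ 2 + X 1 ^ 3 + C a * X 2 ^ 3
noncomputable def g2P (a : ℂ) : R3 :=
  (gP a) ^ 2 * (C a * X 2 ^ 3 - X 0 * X 1 ^ 2) + C a * X 1 ^ 6 * X 2 ^ 3
noncomputable def GP (a : ℂ) : R3 :=
  (g2P a) ^ 2 * (C a * X 1 ^ 3 * X 2 ^ 3 - (gP a) ^ 2) + C a * (gP a) ^ 6 * X 1 ^ 3 * X 2 ^ 3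
noncomputable def uP : R3 := X 1 - X 0
noncomputable def eP (a : ℂ) : R3 := C (2:ℂ) * C a * X 2 ^ 3 * uP + X 1 ^ 2 * uP ^ 2
noncomputable def vP (a : ℂ) : R3 :=
  -((C a) ^ 2 * X 2 ^ 6 * X 0) + eP a * (C a * X 2 ^ 3 - X 0 * X 1 ^ 2) + C a * X 1 ^ 4 * X 2 ^ 3
noncomputable def tP (a : ℂ) : R3 :=
  (C a) ^ 3 * X 2 ^ 9 * uP + C a * X 2 ^ 3 * vP a + X 1 ^ 2 * uP * vP a
noncomputable def wP (a : ℂ) : R3 :=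
  C a * X 1 * X 2 ^ 3 * ((g2P a) ^ 2 + (gP a) ^ 6) - tP a * (g2P a * gP a + (C a) ^ 4 * X 2 ^ 12)
noncomputable def mP (a : ℂ) : R3 :=
  C (3:ℂ) * (C a) ^ 8 * X 2 ^ 24 * tP a + C (3:ℂ) * (C a) ^ 4 * X 2 ^ 12 * X 1 ^ 2 * (tP a) ^ 2
    + X 1 ^ 4 * (tP a) ^ 3
noncomputable def Q0P (a : ℂ) : R3 :=
  (C a) ^ 13 * X 2 ^ 39 * vP a + C a * X 2 ^ 3 * g2P a * mP a
    + C (2:ℂ) * (C a) ^ 8 * X 2 ^ 24 * wP a - X 1 ^ 2 * (wP a) ^ 2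

lemma I1 (a : ℂ) : gP a = C a * X 2 ^ 3 + X 1 ^ 2 * uP := by unfold gP uP; ring

lemma I2 (a : ℂ) : g2P a = (C a) ^ 3 * X 2 ^ 9 + X 1 ^ 2 * vP a := by
  unfold g2P vP eP uP gP; simp only [map_ofNat]; ring

lemma I3 (a : ℂ) : g2P a * gP a = (C a) ^ 4 * X 2 ^ 12 + X 1 ^ 2 * tP a := by
  rw [I2 a, I1 a]; unfold tP; ring

lemma I4 (a : ℂ) : GP a = -((C a) ^ 8 * X 2 ^ 24) + X 1 ^ 2 * wP a := by
  have h3 := I3 a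
  unfold GP wP
  linear_combination (-(g2P a * gP a + (C a) ^ 4 * X 2 ^ 12)) * h3

lemma I6 (a : ℂ) : (g2P a * gP a) ^ 3 = (C a) ^ 12 * X 2 ^ 36 + X 1 ^ 2 * mP a := by
  have h3 := I3 a
  unfold mP
  simp only [map_ofNat]
  linear_combination ((g2P a * gP a) ^ 2 + (g2P a * gP a) * ((C a) ^ 4 * X 2 ^ 12 + X 1 ^ 2 * tP a)
    + ((C a) ^ 4 * X 2 ^ 12 + X 1 ^ 2 * tP a) ^ 2) * h3

lemma I5 (a : ℂ) :
    C a * X 2 ^ 3 * (g2P a) ^ 4 * (gP a) ^ 3 - (GP a) ^ 2 = X 1 ^ 2 * Q0P a := by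
  have h6 := I6 a
  have h2 := I2 a
  have h4 := I4 a
  unfold Q0P
  simp only [map_ofNat]
  linear_combination (C a * X 2 ^ 3 * g2P a) * h6 + (C a) ^ 13 * X 2 ^ 39 * h2
    + (-(GP a + (-((C a) ^ 8 * X 2 ^ 24) + X 1 ^ 2 * wP a))) * h4

lemma I0 (a : ℂ) :
    g2P a - (gP a) ^ 3 = X 1 ^ 3 * (C a * X 1 ^ 3 * X 2 ^ 3 - (gP a) ^ 2) := by
  unfold g2P gP; ring

lemma I7 (a : ℂ) :
    X 1 ^ 3 * GP a - (g2P a) ^ 3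
      = (gP a) ^ 3 * (C a * (gP a) ^ 3 * X 1 ^ 6 * X 2 ^ 3 - (g2P a) ^ 2) := by
  have h0 := I0 a
  unfold GP
  linear_combination (-(g2P a) ^ 2) * h0

lemma primeX3 (i : Fin 3) : Prime (X i : R3) := by
  have h0 : Prime (X 0 : R3) := by
    rw [← MulEquiv.prime_iff (finSuccEquiv ℂ 2).toMulEquiv]
    simpa [finSuccEquiv_X_zero] using Polynomial.prime_X
  have := MulEquiv.prime_iff (renameEquiv ℂ (Equiv.swap (0 : Fin 3) i)).toMulEquiv
    (p := (X 0 : R3))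
  rw [← this] at h0
  simpa [renameEquiv_apply, rename_X, Equiv.swap_apply_left] using h0

lemma unit_totalDegree : ∀ {n : ℕ} (q : MvPolynomial (Fin n) ℂ),
    IsUnit q → q.totalDegree = 0 := by
  intro n
  induction n with
  | zero =>
    intro q _
    rw [totalDegree_eq_zero_iff]
    intro m _ x
    exact x.elim0
  | succ n ih =>
    intro q hq
    set E := finSuccEquiv ℂ n with hE
    have hu : IsUnit (E q) := hq.map E
    have hdeg : (E q).degree = 0 := Polynomial.degree_eq_zero_of_isUnit hu
    have hEq : E q = Polynomial.C ((E q).coeff 0) :=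
      (Polynomial.eq_C_of_degree_le_zero (le_of_eq hdeg))
    set c := (E q).coeff 0 with hc
    have hcu : IsUnit c := by
      rw [hEq] at hu
      exact Polynomial.isUnit_C.mp hu
    have key : E (rename Fin.succ c) = Polynomial.C c := by
      induction c using MvPolynomial.induction_on with
      | C r =>
        have h2 : (MvPolynomial.finSuccEquiv ℂ n).symm (Polynomial.C (C r)) = C r := by
          have := congrFun (congrArg (fun f => f.toFun) (finSuccEquiv_comp_C_eq_C n (R := ℂ))) r
          simpa using this
        rw [rename_C, hE, ← h2, AlgEquiv.apply_symm_apply]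
      | add p q hp hq => simp [map_add, hp, hq]
      | mul_X p i hp => simpa [map_mul, rename_X, finSuccEquiv_X_succ, hE] using hp
    have hq_eq : q = rename Fin.succ c := by
      apply (finSuccEquiv ℂ n).injective
      rw [← hE, key, ← hEq]
    have := totalDegree_rename_le Fin.succ c
    rw [← hq_eq] at this
    have hc0 : c.totalDegree = 0 := ih c hcu
    omega

lemma not_dvd_of_eval {P : R3} (p : Fin 3 → ℂ) (i : Fin 3) (hpi : p i = 0)
    (hP : eval p P ≠ 0) : ¬ (X i ∣ P) := by
  rintro ⟨s, rfl⟩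
  apply hP
  rw [map_mul, eval_X, hpi, zero_mul]

-- evaluation facts at the point (0,0,1)
lemma ev0_g (a : ℂ) : eval ![0,0,1] (gP a) = a := by simp [gP]
lemma ev0_g2 (a : ℂ) : eval ![0,0,1] (g2P a) = a ^ 3 := by simp [g2P, gP]; ring
lemma ev0_G (a : ℂ) : eval ![0,0,1] (GP a) = -(a ^ 8) := by simp [GP, g2P, gP]; ring

-- evaluation facts at the point (-1,1,0)
lemma ev2_g (a : ℂ) : eval ![-1,1,0] (gP a) = 2 := by simp [gP]; ring
lemma ev2_g2 (a : ℂ) : eval ![-1,1,0] (g2P a) = 4 := by simp [g2P, gP]; ring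
lemma ev2_G (a : ℂ) : eval ![-1,1,0] (GP a) = -64 := by simp [GP, g2P, gP]; ring

end HV14

open HV14

set_option maxHeartbeats 2000000 in
/-- the fourth iterate of the homogeneous form
`φ'(X,Y,Z) = (Y³, −XY² + Y³ + aZ³, Y²Z)` of the Hietarinta–Viallet mapping is
homogeneous of degree 81 and its components share a common homogeneous factor
of degree 8, after whose removal the quotients (of degree 73) have no common
nonconstant factor. -/
theorem hv_p2_fourth_iterate_cancellation (a : ℂ) (ha : a ≠ 0)
    (f g h : MvPolynomial (Fin 3) ℂ)
    (hf : f = X 1 ^ 3)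
    (hg : g = -X 0 * X 1 ^ 2 + X 1 ^ 3 + C a * X 2 ^ 3)
    (hh : h = X 1 ^ 2 * X 2)
    (fs gs hs : ℕ → MvPolynomial (Fin 3) ℂ)
    (hfs1 : fs 1 = f) (hgs1 : gs 1 = g) (hhs1 : hs 1 = h)
    (hfs : ∀ n : ℕ, fs (n + 1) = aeval ![fs n, gs n, hs n] f)
    (hgs : ∀ n : ℕ, gs (n + 1) = aeval ![fs n, gs n, hs n] g)
    (hhs : ∀ n : ℕ, hs (n + 1) = aeval ![fs n, gs n, hs n] h) :
    (fs 4).IsHomogeneous 81 ∧ (gs 4).IsHomogeneous 81 ∧ (hs 4).IsHomogeneous 81 ∧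
    ∃ p f' g' h' : MvPolynomial (Fin 3) ℂ,
      p.IsHomogeneous 8 ∧
      fs 4 = p * f' ∧ gs 4 = p * g' ∧ hs 4 = p * h' ∧
      f'.IsHomogeneous 73 ∧ g'.IsHomogeneous 73 ∧ h'.IsHomogeneous 73 ∧
      (∀ q : MvPolynomial (Fin 3) ℂ, q ∣ f' → q ∣ g' → q ∣ h' → q.totalDegree = 0) := by
  -- step equations
  have stepf : ∀ n : ℕ, fs (n + 1) = (gs n) ^ 3 := by
    intro n; rw [hfs n, hf]; simp
  have stepg : ∀ n : ℕ, gs (n + 1) = -(fs n) * (gs n) ^ 2 + (gs n) ^ 3 + C a * (hs n) ^ 3 := by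
    intro n; rw [hgs n, hg]; simp
  have steph : ∀ n : ℕ, hs (n + 1) = (gs n) ^ 2 * (hs n) := by
    intro n; rw [hhs n, hh]; simp
  have hgP : g = gP a := by rw [hg]; rfl
  -- closed forms
  have Eg2 : gs 2 = g2P a := by
    rw [stepg 1, hfs1, hgs1, hhs1, hf, hgP, hh]
    unfold g2P gP; ring
  have Eg3 : gs 3 = X 1 ^ 3 * GP a := by
    rw [stepg 2, stepf 1, steph 1, hgs1, hhs1, Eg2, hgP, hh]
    unfold GP
    linear_combination (g2P a) ^ 2 * I0 a
  have Eh3 : hs 3 = (g2P a) ^ 2 * (gP a) ^ 2 * (X 1 ^ 2 * X 2) := by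
    rw [steph 2, Eg2, steph 1, hgs1, hhs1, hgP, hh]; ring
  -- level four
  have Ef4 : fs 4 = X 1 ^ 8 * (X 1 * (GP a) ^ 3) := by
    rw [stepf 3, Eg3]; ring
  have Eh4 : hs 4 = X 1 ^ 8 * (X 2 * (GP a) ^ 2 * (g2P a) ^ 2 * (gP a) ^ 2) := by
    rw [steph 3, Eg3, Eh3]; ring
  have Eg4 : gs 4 = X 1 ^ 8 *
      (C a * X 1 ^ 4 * X 2 ^ 3 * (GP a) ^ 2 * (gP a) ^ 6 + (g2P a) ^ 2 * (gP a) ^ 3 * Q0P a) := by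
    have Ef3 : fs 3 = (g2P a) ^ 3 := by rw [stepf 2, Eg2]
    rw [stepg 3, Ef3, Eg3, Eh3]
    linear_combination (X 1 ^ 6 * (GP a) ^ 2) * I7 a
      + (X 1 ^ 6 * (g2P a) ^ 2 * (gP a) ^ 3) * I5 a
  -- homogeneity
  have HC : ∀ c : ℂ, (C c : R3).IsHomogeneous 0 := fun c => isHomogeneous_C _ _
  have HXp : ∀ (i : Fin 3) (k : ℕ), ((X i : R3) ^ k).IsHomogeneous k :=
    fun i k => isHomogeneous_X_pow i k
  have HX : ∀ i : Fin 3, ((X i : R3)).IsHomogeneous 1 := fun i => isHomogeneous_X ℂ i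
  have Hu : uP.IsHomogeneous 1 := (HX 1).sub (HX 0)
  have Hg : (gP a).IsHomogeneous 3 := by
    unfold gP
    exact (((HX 0).neg.mul (HXp 1 2)).add (HXp 1 3)).add ((HC a).mul (HXp 2 3))
  have Hg2 : (g2P a).IsHomogeneous 9 := by
    unfold g2P
    exact ((Hg.pow 2).mul (((HC a).mul (HXp 2 3)).sub ((HX 0).mul (HXp 1 2)))).add
      (((HC a).mul (HXp 1 6)).mul (HXp 2 3))
  have HG : (GP a).IsHomogeneous 24 := by
    unfold GP
    exact ((Hg2.pow 2).mul ((((HC a).mul (HXp 1 3)).mul (HXp 2 3)).sub (Hg.pow 2))).add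
      ((((HC a).mul (Hg.pow 6)).mul (HXp 1 3)).mul (HXp 2 3))
  have He : (eP a).IsHomogeneous 4 := by
    unfold eP
    exact ((((HC 2).mul (HC a)).mul (HXp 2 3)).mul Hu).add ((HXp 1 2).mul (Hu.pow 2))
  have Hv : (vP a).IsHomogeneous 7 := by
    unfold vP
    exact (((((HC a).pow 2).mul (HXp 2 6)).mul (HX 0)).neg.add
      (He.mul (((HC a).mul (HXp 2 3)).sub ((HX 0).mul (HXp 1 2))))).add
      (((HC a).mul (HXp 1 4)).mul (HXp 2 3))
  have Ht : (tP a).IsHomogeneous 10 := by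
    unfold tP
    exact (((((HC a).pow 3).mul (HXp 2 9)).mul Hu).add
      (((HC a).mul (HXp 2 3)).mul Hv)).add (((HXp 1 2).mul Hu).mul Hv)
  have Hw : (wP a).IsHomogeneous 22 := by
    unfold wP
    exact ((((HC a).mul (HX 1)).mul (HXp 2 3)).mul ((Hg2.pow 2).add (Hg.pow 6))).sub
      (Ht.mul ((Hg2.mul Hg).add (((HC a).pow 4).mul (HXp 2 12))))
  have Hm : (mP a).IsHomogeneous 34 := by
    unfold mP
    exact (((((HC 3).mul ((HC a).pow 8)).mul (HXp 2 24)).mul Ht).add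
      (((((HC 3).mul ((HC a).pow 4)).mul (HXp 2 12)).mul (HXp 1 2)).mul (Ht.pow 2))).add
      ((HXp 1 4).mul (Ht.pow 3))
  have HQ : (Q0P a).IsHomogeneous 46 := by
    unfold Q0P
    exact (((((HC a).pow 13).mul (HXp 2 39)).mul Hv).add
      ((((HC a).mul (HXp 2 3)).mul Hg2).mul Hm)).add
      ((((HC 2).mul ((HC a).pow 8)).mul (HXp 2 24)).mul Hw) |>.sub
      ((HXp 1 2).mul (Hw.pow 2))
  have Hf' : (X 1 * (GP a) ^ 3 : R3).IsHomogeneous 73 := (HX 1).mul (HG.pow 3)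
  have Hg' : (C a * X 1 ^ 4 * X 2 ^ 3 * (GP a) ^ 2 * (gP a) ^ 6
      + (g2P a) ^ 2 * (gP a) ^ 3 * Q0P a : R3).IsHomogeneous 73 :=
    (((((HC a).mul (HXp 1 4)).mul (HXp 2 3)).mul (HG.pow 2)).mul (Hg.pow 6)).add
      (((Hg2.pow 2).mul (Hg.pow 3)).mul HQ)
  have Hh' : (X 2 * (GP a) ^ 2 * (g2P a) ^ 2 * (gP a) ^ 2 : R3).IsHomogeneous 73 :=
    (((HX 2).mul (HG.pow 2)).mul (Hg2.pow 2)).mul (Hg.pow 2)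
  -- non-divisibility facts
  have ha2 : (a : ℂ) ≠ 0 := ha
  have NYg : ¬ (X 1 : R3) ∣ gP a := by
    refine not_dvd_of_eval ![0,0,1] 1 (by norm_num) ?_
    rw [ev0_g]; exact ha
  have NYg2 : ¬ (X 1 : R3) ∣ g2P a := by
    refine not_dvd_of_eval ![0,0,1] 1 (by norm_num) ?_
    rw [ev0_g2]; exact pow_ne_zero _ ha
  have NYh' : ¬ (X 1 : R3) ∣ (X 2 * (GP a) ^ 2 * (g2P a) ^ 2 * (gP a) ^ 2) := by
    have hev : eval ![0,0,1] (X 2 * (GP a) ^ 2 * (g2P a) ^ 2 * (gP a) ^ 2 : R3) = a ^ 24 := by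
      simp only [map_mul, map_pow, ev0_G, ev0_g2, ev0_g, eval_X, Matrix.cons_val_two, Matrix.tail_cons, Matrix.head_cons]
      norm_num
      ring
    refine not_dvd_of_eval ![0,0,1] 1 (by norm_num) ?_
    rw [hev]
    exact pow_ne_zero _ ha
  have NZg : ¬ (X 2 : R3) ∣ gP a := by
    refine not_dvd_of_eval ![-1,1,0] 2 (by rfl) ?_
    rw [ev2_g]; norm_num
  have NZg2 : ¬ (X 2 : R3) ∣ g2P a := by
    refine not_dvd_of_eval ![-1,1,0] 2 (by rfl) ?_
    rw [ev2_g2]; norm_num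
  have NZG : ¬ (X 2 : R3) ∣ GP a := by
    refine not_dvd_of_eval ![-1,1,0] 2 (by rfl) ?_
    rw [ev2_G]; norm_num
  -- main conjunction
  refine ⟨?_, ?_, ?_, X 1 ^ 8, X 1 * (GP a) ^ 3,
    C a * X 1 ^ 4 * X 2 ^ 3 * (GP a) ^ 2 * (gP a) ^ 6 + (g2P a) ^ 2 * (gP a) ^ 3 * Q0P a,
    X 2 * (GP a) ^ 2 * (g2P a) ^ 2 * (gP a) ^ 2,
    HXp 1 8, Ef4, Eg4, Eh4, Hf', Hg', Hh', ?_⟩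
  · rw [Ef4]; exact (HXp 1 8).mul Hf'
  · rw [Eg4]; exact (HXp 1 8).mul Hg'
  · rw [Eh4]; exact (HXp 1 8).mul Hh'
  -- coprimality
  intro q hqf hqg hqh
  by_contra hdeg
  have hqu : ¬ IsUnit q := fun hu => hdeg (unit_totalDegree q hu)
  have hG0 : GP a ≠ 0 := by
    intro hG
    apply NZG; rw [hG]; exact dvd_zero _
  have hq0 : q ≠ 0 := by
    rintro rfl
    obtain ⟨s, hs⟩ := hqf
    rw [zero_mul] at hs
    exact (mul_ne_zero (X_ne_zero 1) (pow_ne_zero 3 hG0)) hs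
  obtain ⟨r, hirr, hrq⟩ := WfDvdMonoid.exists_irreducible_factor hqu hq0
  have hpr : Prime r := UniqueFactorizationMonoid.irreducible_iff_prime.mp hirr
  have hrf : r ∣ X 1 * (GP a) ^ 3 := hrq.trans hqf
  have hrg' : r ∣ C a * X 1 ^ 4 * X 2 ^ 3 * (GP a) ^ 2 * (gP a) ^ 6
      + (g2P a) ^ 2 * (gP a) ^ 3 * Q0P a := hrq.trans hqg
  have hrh' : r ∣ X 2 * (GP a) ^ 2 * (g2P a) ^ 2 * (gP a) ^ 2 := hrq.trans hqh
  have toX : ∀ i : Fin 3, r ∣ X i → (X i : R3) ∣ r := fun i hri =>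
    hirr.dvd_symm (primeX3 i).irreducible hri
  have hnCa : ¬ r ∣ C a := by
    intro hrc
    exact hirr.not_isUnit (isUnit_of_dvd_unit hrc ((isUnit_iff_ne_zero.mpr ha).map C))
  -- case r ∣ g and r ∣ g2 leads to contradiction
  have casegg2 : r ∣ gP a → r ∣ g2P a → False := by
    intro hg hg2
    have key : C a * X 1 ^ 6 * X 2 ^ 3
        = g2P a - gP a * (gP a * (C a * X 2 ^ 3 - X 0 * X 1 ^ 2)) := by
      unfold g2P; ring
    have : r ∣ C a * X 1 ^ 6 * X 2 ^ 3 := by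
      rw [key]; exact dvd_sub hg2 (Dvd.dvd.mul_right hg _ |>.mul_left _)
    rcases hpr.2.2 _ _ this with h1 | h2
    · rcases hpr.2.2 _ _ h1 with h3 | h4
      · exact hnCa h3
      · exact NYg ((toX 1 (hpr.dvd_of_dvd_pow h4)).trans hg)
    · exact NZg ((toX 2 (hpr.dvd_of_dvd_pow h2)).trans hg)
  -- main case analysis: r divides f' = X1 * G^3
  rcases hpr.2.2 _ _ hrf with hY | hGpow
  · -- r ∣ X 1 : then X 1 ∣ h', contradiction
    exact NYh' ((toX 1 hY).trans hrh')
  have hrG : r ∣ GP a := hpr.dvd_of_dvd_pow hGpow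
  -- from r ∣ g' deduce r ∣ g2^2 * g^3 * Q0
  have h1 : r ∣ (g2P a) ^ 2 * (gP a) ^ 3 * Q0P a := by
    have key : (g2P a) ^ 2 * (gP a) ^ 3 * Q0P a
        = (C a * X 1 ^ 4 * X 2 ^ 3 * (GP a) ^ 2 * (gP a) ^ 6
            + (g2P a) ^ 2 * (gP a) ^ 3 * Q0P a)
          - GP a * (C a * X 1 ^ 4 * X 2 ^ 3 * GP a * (gP a) ^ 6) := by ring
    rw [key]
    exact dvd_sub hrg' (Dvd.dvd.mul_right hrG _)
  have hbig : r ∣ C a * X 2 ^ 3 * (g2P a) ^ 6 * (gP a) ^ 6 := by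
    have key : C a * X 2 ^ 3 * (g2P a) ^ 6 * (gP a) ^ 6
        = X 1 ^ 2 * ((g2P a) ^ 2 * (gP a) ^ 3 * Q0P a)
          + GP a * (GP a * ((g2P a) ^ 2 * (gP a) ^ 3)) := by
      linear_combination ((g2P a) ^ 2 * (gP a) ^ 3) * I5 a
    rw [key]
    exact dvd_add (h1.mul_left _) (Dvd.dvd.mul_right hrG _)
  rcases hpr.2.2 _ _ hbig with h2 | h3
  rotate_left
  · -- r ∣ g^6  hence r ∣ g
    have hrg : r ∣ gP a := hpr.dvd_of_dvd_pow h3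
    have key : C a * X 1 ^ 3 * X 2 ^ 3 * (g2P a) ^ 2
        = GP a - gP a * (C a * (gP a) ^ 5 * X 1 ^ 3 * X 2 ^ 3 - (g2P a) ^ 2 * gP a) := by
      unfold GP; ring
    have : r ∣ C a * X 1 ^ 3 * X 2 ^ 3 * (g2P a) ^ 2 := by
      rw [key]; exact dvd_sub hrG (Dvd.dvd.mul_right hrg _)
    rcases hpr.2.2 _ _ this with h4 | h5
    · rcases hpr.2.2 _ _ h4 with h6 | h7
      · rcases hpr.2.2 _ _ h6 with h8 | h9
        · exact hnCa h8
        · exact NYg ((toX 1 (hpr.dvd_of_dvd_pow h9)).trans hrg)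
      · exact NZg ((toX 2 (hpr.dvd_of_dvd_pow h7)).trans hrg)
    · exact casegg2 hrg (hpr.dvd_of_dvd_pow h5)
  · rcases hpr.2.2 _ _ h2 with h4 | h5
    rotate_left
    · -- r ∣ g2^6 hence r ∣ g2
      have hrg2 : r ∣ g2P a := hpr.dvd_of_dvd_pow h5
      have key : C a * (gP a) ^ 6 * X 1 ^ 3 * X 2 ^ 3
          = GP a - g2P a * (g2P a * (C a * X 1 ^ 3 * X 2 ^ 3 - (gP a) ^ 2)) := by
        unfold GP; ring
      have : r ∣ C a * (gP a) ^ 6 * X 1 ^ 3 * X 2 ^ 3 := by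
        rw [key]; exact dvd_sub hrG (Dvd.dvd.mul_right hrg2 _ |>.mul_left _)
      rcases hpr.2.2 _ _ this with h6 | h7
      · rcases hpr.2.2 _ _ h6 with h8 | h9
        · rcases hpr.2.2 _ _ h8 with h10 | h11
          · exact hnCa h10
          · exact casegg2 (hpr.dvd_of_dvd_pow h11) hrg2
        · exact NYg2 ((toX 1 (hpr.dvd_of_dvd_pow h9)).trans hrg2)
      · exact NZg2 ((toX 2 (hpr.dvd_of_dvd_pow h7)).trans hrg2)
    · rcases hpr.2.2 _ _ h4 with h6 | h7
      · exact hnCa h6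
      · exact NZG ((toX 2 (hpr.dvd_of_dvd_pow h7)).trans hrG)
end

section
/- Let φ* be the ℤ-linear endomorphism of L = ℤ¹⁶ defined on the basis by φ*(H₀) = 3H₀ + H₁ − E₅ − E₆ − E₇ − E₈ − E₉ − E₁₀, φ*(H₁) = H₀, φ*(E₁) = H₀ − E₈, φ*(E₂) = H₀ − E₇, φ*(E₃) = H₀ − E₆, φ*(E₄) = H₀ − E₅, φ*(E₅) = E₁₁, φ*(E₆) = E₁₂, φ*(E₇) = E₁₃, φ*(E₈) = E₁₄, φ*(E₉) = H₀ − E₁₀, φ*(E₁₀) = H₀ − E₉, φ*(E₁₁) = E₁, φ*(E₁₂) = E₂, φ*(E₁₃) = E₃, φ*(E₁₄) = E₄. Set α₁ = 2H₁ − E₁ − E₂ − E₃ − E₄, α₂ = 2H₀ − E₅ − E₆ − E₇ − E₈, α₃ = 2H₀ + 2H₁ − 2E₉ − 2E₁₀ − E₁₁ − E₁₂ − E₁₃ − E₁₄. Then φ*(α₁) = −α₂, φ*(α₂) = 2α₂ + α₃, and φ*(α₃) = α₁ + 2α₂; i.e. φ* preserves the sublattice ℤα₁ + ℤα₂ + ℤα₃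 and acts on it (on coefficient column vectors) by the matrix [[0,0,1],[−1,2,2],[0,1,0]]. -/
/-- the action `φ*` of the Hietarinta–Viallet mapping preserves
the root sublattice `ℤα₁ + ℤα₂ + ℤα₃`: `φ*(α₁) = −α₂`, `φ*(α₂) = 2α₂ + α₃`,
`φ*(α₃) = α₁ + 2α₂`, i.e. on coefficient vectors it acts by the matrix
`[[0,0,1],[−1,2,2],[0,1,0]]`. -/
theorem hv_action_on_root_lattice
    (T : (Fin 16 → ℤ) →ₗ[ℤ] (Fin 16 → ℤ))
    (e : Fin 16 → (Fin 16 → ℤ)) (he : e = hvBasis)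
    (hT0 : T (e 0) = (3 : ℤ) • e 0 + e 1 - e 6 - e 7 - e 8 - e 9 - e 10 - e 11)
    (hT1 : T (e 1) = e 0)
    (hT2 : T (e 2) = e 0 - e 9)
    (hT3 : T (e 3) = e 0 - e 8)
    (hT4 : T (e 4) = e 0 - e 7)
    (hT5 : T (e 5) = e 0 - e 6)
    (hT6 : T (e 6) = e 12)
    (hT7 : T (e 7) = e 13)
    (hT8 : T (e 8) = e 14)
    (hT9 : T (e 9) = e 15)
    (hT10 : T (e 10) = e 0 - e 11)
    (hT11 : T (e 11) = e 0 - e 10)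
    (hT12 : T (e 12) = e 2)
    (hT13 : T (e 13) = e 3)
    (hT14 : T (e 14) = e 4)
    (hT15 : T (e 15) = e 5)
    (α : Fin 3 → (Fin 16 → ℤ))
    (hα0 : α 0 = (2 : ℤ) • e 1 - e 2 - e 3 - e 4 - e 5)
    (hα1 : α 1 = (2 : ℤ) • e 0 - e 6 - e 7 - e 8 - e 9)
    (hα2 : α 2 = (2 : ℤ) • e 0 + (2 : ℤ) • e 1 - (2 : ℤ) • e 10 - (2 : ℤ) • e 11
        - e 12 - e 13 - e 14 - e 15) :
    T (α 0) = -α 1 ∧ T (α 1) = (2 : ℤ) • α 1 + α 2 ∧ T (α 2) = α 0 + (2 : ℤ) • α 1 ∧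
    ∀ r : Fin 3 → ℤ,
      T (r 0 • α 0 + r 1 • α 1 + r 2 • α 2)
        = ((!![0, 0, 1; -1, 2, 2; 0, 1, 0] : Matrix (Fin 3) (Fin 3) ℤ).mulVec r 0) • α 0
          + ((!![0, 0, 1; -1, 2, 2; 0, 1, 0] : Matrix (Fin 3) (Fin 3) ℤ).mulVec r 1) • α 1
          + ((!![0, 0, 1; -1, 2, 2; 0, 1, 0] : Matrix (Fin 3) (Fin 3) ℤ).mulVec r 2) • α 2 := by
  have h0 : T (α 0) = -α 1 := by
    rw [hα0, hα1]
    simp only [map_sub, map_add, map_smul, hT1, hT2, hT3, hT4, hT5]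
    module
  have h1 : T (α 1) = (2 : ℤ) • α 1 + α 2 := by
    rw [hα1, hα2]
    simp only [map_sub, map_add, map_smul, hT0, hT6, hT7, hT8, hT9]
    module
  have h2 : T (α 2) = α 0 + (2 : ℤ) • α 1 := by
    rw [hα2, hα0, hα1]
    simp only [map_sub, map_add, map_smul, hT0, hT1, hT10, hT11, hT12, hT13,
      hT14, hT15]
    module
  refine ⟨h0, h1, h2, fun r => ?_⟩
  have m0 : (!![0, 0, 1; -1, 2, 2; 0, 1, 0] : Matrix (Fin 3) (Fin 3) ℤ).mulVec r 0
      = r 2 := by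
    simp [Matrix.mulVec, dotProduct, Fin.sum_univ_three]
  have m1 : (!![0, 0, 1; -1, 2, 2; 0, 1, 0] : Matrix (Fin 3) (Fin 3) ℤ).mulVec r 1
      = -r 0 + 2 * r 1 + 2 * r 2 := by
    simp [Matrix.mulVec, dotProduct, Fin.sum_univ_three]
  have m2 : (!![0, 0, 1; -1, 2, 2; 0, 1, 0] : Matrix (Fin 3) (Fin 3) ℤ).mulVec r 2
      = r 1 := by
    simp [Matrix.mulVec, dotProduct, Fin.sum_univ_three]
  rw [m0, m1, m2]
  simp only [map_add, map_smul, h0, h1, h2]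
  module
end
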